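/- arXiv:1006.2453 — 2 statements merged into one kernel-verified Lean document; each statement's English description precedes it below -/
import Mathlib

section
/- Let φ(x) = exp(−λx²) with λ > 0. Then for any distinct real points x₁,…,x_n and any nonzero real vector (y₁,…,y_n), ∑_{j,k=1}^n y_j y_k φ(x_j − x_k) > 0; i.e., the Gaussian interpolation matrix (φ(x_j − x_k))_{j,k} is symmetric positive definite. -/
theorem gaussian_positive_definite
    (lam : ℝ) (hlam : 0 < lam) (n : ℕ)
    (x : Fin n → ℝ) (hx : Function.Injective x)
    (y : Fin n → ℝ) (hy : y ≠ 0) :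
    0 < ∑ j, ∑ k, y j * y k * Real.exp (-lam * (x j - x k) ^ 2) := by
  classical
  set c : Fin n → ℝ := fun j => y j * Real.exp (-lam * (x j) ^ 2) with hc
  have hexp_tsum : ∀ t : ℝ, Real.exp t = ∑' m : ℕ, t ^ m / (m.factorial : ℝ) := by
    intro t
    rw [Real.exp_eq_exp_ℝ, NormedSpace.exp_eq_tsum_div]
  set g : Fin n → Fin n → ℕ → ℝ :=
    fun j k m => c j * c k * ((2 * lam * (x j * x k)) ^ m / (m.factorial : ℝ)) with hg
  set f : ℕ → ℝ := fun m => (2 * lam) ^ m / (m.factorial : ℝ) * (∑ j, c j * x j ^ m) ^ 2 with hf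
  have hgsummable : ∀ j k, Summable (g j k) := fun j k =>
    (Real.summable_pow_div_factorial _).mul_left _
  have hterm : ∀ j k, y j * y k * Real.exp (-lam * (x j - x k) ^ 2)
      = ∑' m : ℕ, g j k m := by
    intro j k
    have h1 : -lam * (x j - x k) ^ 2
        = -lam * x j ^ 2 + -lam * x k ^ 2 + 2 * lam * (x j * x k) := by ring
    rw [h1, Real.exp_add, Real.exp_add, hexp_tsum (2 * lam * (x j * x k)),
      ← tsum_mul_left, ← tsum_mul_left]
    simp only [hg, hc]
    exact tsum_congr fun m => by ring
  have hfeq : ∀ m : ℕ, (∑ j, ∑ k, g j k m) = f m := by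
    intro m
    have h2 : (∑ j, c j * x j ^ m) ^ 2
        = ∑ j, ∑ k, (c j * x j ^ m) * (c k * x k ^ m) := by
      rw [sq, Finset.sum_mul_sum]
    simp only [hf, h2, Finset.mul_sum]
    refine Finset.sum_congr rfl fun j _ => Finset.sum_congr rfl fun k _ => ?_
    simp only [hg, mul_pow]
    ring
  have hswap : (∑ j, ∑ k, ∑' m : ℕ, g j k m) = ∑' m : ℕ, ∑ j, ∑ k, g j k m := by
    rw [Summable.tsum_finsetSum fun j _ => summable_sum fun k _ => hgsummable j k]
    exact Finset.sum_congr rfl fun j _ =>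
      (Summable.tsum_finsetSum fun k _ => hgsummable j k).symm
  have htotal : (∑ j, ∑ k, y j * y k * Real.exp (-lam * (x j - x k) ^ 2))
      = ∑' m : ℕ, f m := by
    simp only [hterm]
    rw [hswap]
    exact tsum_congr hfeq
  rw [htotal]
  have hsummable : Summable f := by
    refine Summable.congr ?_ hfeq
    exact summable_sum fun j _ => summable_sum fun k _ => hgsummable j k
  have hnonneg : ∀ m, 0 ≤ f m := by
    intro m
    apply mul_nonneg
    · positivity
    · positivity
  have hex : ∃ m : ℕ, (∑ j, c j * x j ^ m) ≠ 0 := by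
    by_contra h
    push_neg at h
    have hc0 : c = 0 :=
      Matrix.eq_zero_of_forall_pow_sum_mul_pow_eq_zero hx fun i => h (i : ℕ)
    obtain ⟨j, hj⟩ := Function.ne_iff.1 hy
    have hcj := congrFun hc0 j
    simp only [hc, Pi.zero_apply, mul_eq_zero] at hcj
    rcases hcj with h' | h'
    · exact hj h'
    · exact Real.exp_ne_zero _ h'
  obtain ⟨m, hm⟩ := hex
  refine Summable.tsum_pos hsummable hnonneg m ?_
  apply mul_pos
  · positivity
  · positivity
end

section
/- Let φ(r) = (r² + c²)^{1/2} for a real constant c, and let x₁,…,x_n be points in ℝ^d. Then for any real numbers y₁,…,y_n with ∑_j y_j = 0, one has ∑_{j,k=1}^n y_j y_k φ(‖x_j − x_k‖) ≤ 0. -/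
open Finset MeasureTheory Real Set

lemma inner_pow_nonneg {n d : ℕ} (x : Fin n → Fin d → ℝ) (z : Fin n → ℝ) (m : ℕ) :
    0 ≤ ∑ j, ∑ k, z j * z k * (∑ i, x j i * x k i) ^ m := by
  have h : ∀ j k : Fin n, z j * z k * (∑ i, x j i * x k i) ^ m
      = ∑ p : Fin m → Fin d, (z j * ∏ t, x j (p t)) * (z k * ∏ t, x k (p t)) := by
    intro j k
    rw [Fintype.sum_pow, Finset.mul_sum]
    refine Finset.sum_congr rfl fun p _ => ?_
    rw [Finset.prod_mul_distrib]; ring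
  simp_rw [h]
  have h2 : ∀ j : Fin n, ∑ k : Fin n, ∑ p : Fin m → Fin d,
      (z j * ∏ t, x j (p t)) * (z k * ∏ t, x k (p t))
      = ∑ p : Fin m → Fin d, ∑ k : Fin n,
      (z j * ∏ t, x j (p t)) * (z k * ∏ t, x k (p t)) := fun j => Finset.sum_comm
  simp_rw [h2]
  rw [Finset.sum_comm]
  refine Finset.sum_nonneg fun p _ => ?_
  have : ∑ j : Fin n, ∑ k : Fin n, (z j * ∏ t, x j (p t)) * (z k * ∏ t, x k (p t))
      = (∑ j : Fin n, z j * ∏ t, x j (p t)) ^ 2 := by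
    rw [sq, Finset.sum_mul_sum]
  rw [this]; positivity

lemma exp_inner_nonneg {n d : ℕ} (x : Fin n → Fin d → ℝ) (z : Fin n → ℝ) {s : ℝ} (hs : 0 ≤ s) :
    0 ≤ ∑ j, ∑ k, z j * z k * Real.exp (s * ∑ i, x j i * x k i) := by
  have hexp : ∀ t : ℝ, Real.exp t = ∑' m : ℕ, t ^ m / m.factorial := by
    intro t
    rw [Real.exp_eq_exp_ℝ, NormedSpace.exp_eq_tsum_div]
  set F : Fin n → Fin n → ℕ → ℝ :=
    fun j k m => z j * z k * ((s * ∑ i, x j i * x k i) ^ m / m.factorial) with hF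
  have hsumm : ∀ j k : Fin n, Summable (F j k) := by
    intro j k
    exact (Real.summable_pow_div_factorial _).mul_left _
  have hsumm2 : ∀ m : ℕ, ∀ j : Fin n, Summable (fun p : Fin n × ℕ => 0) := by
    intro _ _; exact summable_zero
  have step1 : ∀ j : Fin n, ∑ k, ∑' m : ℕ, F j k m = ∑' m : ℕ, ∑ k, F j k m :=
    fun j => (Summable.tsum_finsetSum fun k _ => hsumm j k).symm
  have hsumm' : ∀ j : Fin n, Summable (fun m => ∑ k, F j k m) :=
    fun j => summable_sum fun k _ => hsumm j k
  have step2 : ∑ j, ∑' m : ℕ, ∑ k, F j k m = ∑' m : ℕ, ∑ j, ∑ k, F j k m :=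
    (Summable.tsum_finsetSum fun j _ => hsumm' j).symm
  calc (0:ℝ) ≤ ∑' m : ℕ, ∑ j, ∑ k, F j k m := by
        refine tsum_nonneg fun m => ?_
        have : ∀ j k : Fin n, F j k m
            = (s ^ m / m.factorial) * (z j * z k * (∑ i, x j i * x k i) ^ m) := by
          intro j k; rw [hF]; simp only []; rw [mul_pow]; ring
        simp_rw [this, ← Finset.mul_sum]
        exact mul_nonneg (by positivity) (inner_pow_nonneg x z m)
    _ = ∑ j, ∑ k, z j * z k * Real.exp (s * ∑ i, x j i * x k i) := by
        rw [← step2]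
        simp_rw [← step1]
        refine Finset.sum_congr rfl fun j _ => Finset.sum_congr rfl fun k _ => ?_
        rw [hexp, ← tsum_mul_left]

lemma gaussian_nonneg {n d : ℕ} (x : Fin n → Fin d → ℝ) (y : Fin n → ℝ) {l : ℝ} (hl : 0 ≤ l) :
    0 ≤ ∑ j, ∑ k, y j * y k * Real.exp (-(l * ∑ i, (x j i - x k i) ^ 2)) := by
  set z : Fin n → ℝ := fun j => y j * Real.exp (-(l * ∑ i, x j i ^ 2)) with hz
  have key : ∀ j k : Fin n, y j * y k * Real.exp (-(l * ∑ i, (x j i - x k i) ^ 2))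
      = z j * z k * Real.exp ((2 * l) * ∑ i, x j i * x k i) := by
    intro j k
    rw [hz]
    have expand : ∑ i, (x j i - x k i) ^ 2
        = (∑ i, x j i ^ 2) + (∑ i, x k i ^ 2) - 2 * ∑ i, x j i * x k i := by
      rw [Finset.mul_sum, ← Finset.sum_add_distrib, ← Finset.sum_sub_distrib]
      exact Finset.sum_congr rfl fun i _ => by ring
    rw [expand]
    rw [show -(l * ((∑ i, x j i ^ 2) + (∑ i, x k i ^ 2) - 2 * ∑ i, x j i * x k i))
        = (-(l * ∑ i, x j i ^ 2)) + (-(l * ∑ i, x k i ^ 2)) + ((2*l) * ∑ i, x j i * x k i) by ring]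
    rw [Real.exp_add, Real.exp_add]
    ring
  simp_rw [key]
  exact exp_inner_nonneg x z (by linarith)

noncomputable def G (a t : ℝ) : ℝ := (1 - Real.exp (-(a * t))) * t ^ (-(3/2) : ℝ)

lemma G_meas (a : ℝ) : Measurable (G a) := by
  unfold G
  fun_prop

lemma G_nonneg {a t : ℝ} (ha : 0 ≤ a) (ht : 0 < t) : 0 ≤ G a t := by
  unfold G
  have : Real.exp (-(a*t)) ≤ 1 := Real.exp_le_one_iff.mpr (by nlinarith)
  have h2 : (0:ℝ) ≤ t ^ (-(3/2):ℝ) := Real.rpow_nonneg ht.le _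
  nlinarith

lemma integrableG {a : ℝ} (ha : 0 ≤ a) : IntegrableOn (G a) (Ioi 0) := by
  have hmeas : ∀ s : Set ℝ, AEStronglyMeasurable (G a) (volume.restrict s) :=
    fun s => (G_meas a).aestronglyMeasurable
  rw [← Set.Ioc_union_Ioi_eq_Ioi (zero_le_one (α := ℝ))]
  refine IntegrableOn.union ?_ ?_
  · -- on Ioc 0 1, dominated by a * t ^ (-1/2)
    have hg : IntegrableOn (fun t : ℝ => a * t ^ (-(1/2) : ℝ)) (Ioc 0 1) := by
      refine Integrable.const_mul ?_ a
      have := (intervalIntegral.intervalIntegrable_rpow' (a := 0) (b := 1)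
        (r := (-(1/2):ℝ)) (by norm_num))
      rwa [intervalIntegrable_iff_integrableOn_Ioc_of_le zero_le_one] at this
    refine Integrable.mono hg (hmeas _) ?_
    filter_upwards [ae_restrict_mem measurableSet_Ioc] with t ht
    have ht0 : 0 < t := ht.1
    rw [Real.norm_eq_abs, Real.norm_eq_abs, abs_of_nonneg (G_nonneg ha ht0)]
    have h1 : 1 - Real.exp (-(a*t)) ≤ a * t := by
      have := Real.add_one_le_exp (-(a*t)); linarith
    have h2 : (0:ℝ) < t ^ (-(3/2):ℝ) := Real.rpow_pos_of_pos ht0 _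
    have h3 : G a t ≤ a * t * t ^ (-(3/2):ℝ) := by
      unfold G; nlinarith
    refine h3.trans ?_
    have : t * t ^ (-(3/2):ℝ) = t ^ (-(1/2):ℝ) := by
      nth_rewrite 1 [← Real.rpow_one t]
      rw [← Real.rpow_add ht0]; norm_num
    rw [mul_assoc, this]
    exact le_abs_self _
  · -- on Ioi 1, dominated by t ^ (-3/2)
    have hg : IntegrableOn (fun t : ℝ => t ^ (-(3/2) : ℝ)) (Ioi 1) :=
      integrableOn_Ioi_rpow_of_lt (by norm_num) one_pos
    refine Integrable.mono hg (hmeas _) ?_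
    filter_upwards [ae_restrict_mem measurableSet_Ioi] with t ht
    have ht0 : (0:ℝ) < t := lt_trans one_pos ht
    rw [Real.norm_eq_abs, Real.norm_eq_abs, abs_of_nonneg (G_nonneg ha ht0)]
    have h2 : (0:ℝ) < t ^ (-(3/2):ℝ) := Real.rpow_pos_of_pos ht0 _
    have : Real.exp (-(a*t)) ≥ 0 := (Real.exp_pos _).le
    refine le_trans ?_ (le_abs_self _)
    unfold G; nlinarith

noncomputable def MI (a : ℝ) : ℝ := ∫ t in Ioi 0, G a t

lemma MI_scaling {a : ℝ} (ha : 0 ≤ a) : MI a = Real.sqrt a * MI 1 := by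
  rcases eq_or_lt_of_le ha with h|h
  · simp [MI, G, ← h]
  · have key : ∀ t ∈ Ioi (0:ℝ), G a t = a ^ ((3:ℝ)/2) * G 1 (a * t) := by
      intro t ht
      have ht0 : (0:ℝ) < t := ht
      unfold G
      rw [one_mul, Real.mul_rpow h.le ht0.le]
      have hone : a ^ ((3:ℝ)/2) * a ^ (-(3/2):ℝ) = 1 := by
        rw [← Real.rpow_add h]; norm_num
      rw [show a ^ ((3:ℝ)/2) * ((1 - Real.exp (-(a*t))) * (a ^ (-(3/2):ℝ) * t ^ (-(3/2):ℝ)))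
          = (1 - Real.exp (-(a*t))) * t ^ (-(3/2):ℝ) * (a ^ ((3:ℝ)/2) * a ^ (-(3/2):ℝ)) from by
        ring, hone, mul_one]
    unfold MI
    rw [setIntegral_congr_fun measurableSet_Ioi key, integral_const_mul,
      integral_comp_mul_left_Ioi (G 1) 0 h, mul_zero, smul_eq_mul, ← mul_assoc,
      Real.sqrt_eq_rpow]
    congr 1
    rw [← Real.rpow_neg_one a, ← Real.rpow_add h]
    norm_num

lemma MI_one_pos : 0 < MI 1 := by
  unfold MI
  rw [setIntegral_pos_iff_support_of_nonneg_ae]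
  · refine lt_of_lt_of_le ?_ (measure_mono (?_ : Set.Ioc (0:ℝ) 1 ⊆ _))
    · rw [Real.volume_Ioc]; norm_num
    · intro t ht
      refine ⟨?_, ht.1⟩
      have h1 : Real.exp (-(1 * t)) < 1 := by
        rw [Real.exp_lt_one_iff]; linarith [ht.1]
      have h2 : (0:ℝ) < t ^ (-(3/2):ℝ) := Real.rpow_pos_of_pos ht.1 _
      simp only [Function.mem_support, G]
      exact ne_of_gt (mul_pos (by linarith) h2)
  · filter_upwards [ae_restrict_mem measurableSet_Ioi] with t ht
    exact G_nonneg zero_le_one ht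
  · exact integrableG zero_le_one

theorem multiquadric_almost_negative_definite
    (c : ℝ) (d n : ℕ)
    (x : Fin n → EuclideanSpace ℝ (Fin d))
    (y : Fin n → ℝ) (hy : ∑ j, y j = 0) :
    ∑ j, ∑ k, y j * y k * Real.sqrt (‖x j - x k‖ ^ 2 + c ^ 2) ≤ 0 := by
  set a : Fin n → Fin n → ℝ := fun j k => ‖x j - x k‖ ^ 2 + c ^ 2 with hA
  have ha_nonneg : ∀ j k, 0 ≤ a j k := fun j k => by positivity
  have hnorm : ∀ j k, ‖x j - x k‖ ^ 2 = ∑ i, (x j i - x k i) ^ 2 := by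
    intro j k
    rw [EuclideanSpace.norm_eq, Real.sq_sqrt (Finset.sum_nonneg fun i _ => sq_nonneg _)]
    refine Finset.sum_congr rfl fun i _ => ?_
    rw [Real.norm_eq_abs, sq_abs]
    norm_num
  set S : ℝ := ∑ j, ∑ k, y j * y k * Real.sqrt (a j k) with hS
  have h1 : ∑ j, ∑ k, y j * y k * MI (a j k) = MI 1 * S := by
    rw [hS, Finset.mul_sum]
    refine Finset.sum_congr rfl fun j _ => ?_
    rw [Finset.mul_sum]
    refine Finset.sum_congr rfl fun k _ => ?_
    rw [MI_scaling (ha_nonneg j k)]; ring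
  have hint : ∀ j k : Fin n, Integrable (fun t => y j * y k * G (a j k) t)
      (volume.restrict (Ioi 0)) :=
    fun j k => (integrableG (ha_nonneg j k)).const_mul _
  have h2 : ∑ j, ∑ k, y j * y k * MI (a j k)
      = ∫ t in Ioi 0, ∑ j, ∑ k, y j * y k * G (a j k) t := by
    rw [integral_finset_sum _ (fun j _ => integrable_finset_sum _ fun k _ => hint j k)]
    refine Finset.sum_congr rfl fun j _ => ?_
    rw [integral_finset_sum _ (fun k _ => hint j k)]
    refine Finset.sum_congr rfl fun k _ => ?_
    rw [integral_const_mul]; rfl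
  have h3 : (∫ t in Ioi 0, ∑ j, ∑ k, y j * y k * G (a j k) t) ≤ 0 := by
    refine setIntegral_nonpos_of_ae_restrict ?_
    filter_upwards [ae_restrict_mem measurableSet_Ioi] with t ht
    have ht0 : (0:ℝ) < t := ht
    have gauss : 0 ≤ ∑ j, ∑ k, y j * y k * Real.exp (-(a j k * t)) := by
      have : ∀ j k : Fin n, y j * y k * Real.exp (-(a j k * t))
          = Real.exp (-(c ^ 2 * t)) * (y j * y k * Real.exp (-(t * ∑ i, (x j i - x k i) ^ 2))) := by
        intro j k
        rw [hA]
        simp only []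
        rw [hnorm j k, show -((∑ i, (x j i - x k i) ^ 2 + c ^ 2) * t)
            = -(c ^ 2 * t) + -(t * ∑ i, (x j i - x k i) ^ 2) by ring, Real.exp_add]
        ring
      simp_rw [this, ← Finset.mul_sum]
      exact mul_nonneg (Real.exp_pos _).le
        (gaussian_nonneg (fun j i => x j i) y ht0.le)
    have hyy : ∑ j, ∑ k, y j * y k = 0 := by
      simp_rw [← Finset.mul_sum, hy, mul_zero, Finset.sum_const_zero]
    have expand : ∑ j, ∑ k, y j * y k * G (a j k) t
        = (0 - ∑ j, ∑ k, y j * y k * Real.exp (-(a j k * t))) * t ^ (-(3/2):ℝ) := by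
      rw [← hyy]
      simp_rw [← Finset.sum_sub_distrib, Finset.sum_mul]
      refine Finset.sum_congr rfl fun j _ => Finset.sum_congr rfl fun k _ => ?_
      unfold G; ring
    have h2 : (0:ℝ) ≤ t ^ (-(3/2):ℝ) := Real.rpow_nonneg ht0.le _
    rw [expand, zero_sub, neg_mul]
    exact neg_nonpos_of_nonneg (mul_nonneg gauss h2)
  have final : MI 1 * S ≤ 0 := by rw [← h1, h2]; exact h3
  by_contra hpos
  push_neg at hpos
  nlinarith [MI_one_pos]
end
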